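/- arXiv:1105.5264 — 3 statements merged into one kernel-verified Lean document; each statement's English description precedes it below -/
import Mathlib

section
/- Let A be an n×n real matrix with nonnegative entries. If x = (x_1,...,x_n) is a vector with all entries strictly positive and Ax = λx for some scalar λ, then λ equals the spectral radius of A. -/
/-!
If `μ` is an eigenvalue of `A` with eigenvector `v`, then `|v|` is subinvariant:
`|μ| |v| ≤ A |v|`. Scale the positive eigenvector `x` to the smallest `t x` lying above `|v|`;
it touches `|v|` at some index `k`, and monotonicity of the nonnegative `A` gives
`|μ| t xₖ ≤ (A |v|)ₖ ≤ t (A x)ₖ = λ t xₖ`, so `|μ| ≤ λ`. Since `λ` is itself an eigenvalue,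
`|λ| ≤ λ` as well, so `λ` is the largest modulus.
-/

open Matrix Module.End

namespace Matrix

variable {ι : Type*} [Fintype ι]

theorem mem_spectrum_iff_exists_mulVec_eq_smul {K : Type*} [Field K] [DecidableEq ι]
    (M : Matrix ι ι K) (μ : K) : μ ∈ spectrum K M ↔ ∃ v ≠ 0, M *ᵥ v = μ • v := by
  rw [← spectrum_toLin', ← hasEigenvalue_iff_mem_spectrum]
  constructor
  · intro h
    obtain ⟨v, hv, hv0⟩ := h.exists_hasEigenvector
    exact ⟨v, hv0, by simpa using mem_eigenspace_iff.mp hv⟩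
  · rintro ⟨v, hv0, hv⟩
    exact hasEigenvalue_of_hasEigenvector ⟨mem_eigenspace_iff.mpr (by simpa using hv), hv0⟩

theorem le_of_smul_le_mulVec_of_mulVec_le_smul {A : Matrix ι ι ℝ} (hA : ∀ i j, 0 ≤ A i j)
    {x z : ι → ℝ} (hx : ∀ i, 0 < x i) (hz : 0 ≤ z) (hz0 : z ≠ 0) {c lam : ℝ}
    (hcz : c • z ≤ A *ᵥ z) (hx_sub : A *ᵥ x ≤ lam • x) : c ≤ lam := by
  obtain ⟨j, hj⟩ := Function.ne_iff.mp hz0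
  obtain ⟨k, -, hk⟩ := Finset.exists_max_image Finset.univ (fun i => z i / x i)
    ⟨j, Finset.mem_univ j⟩
  set t := z k / x k
  have hzt : z ≤ t • x := fun i => (div_le_iff₀ (hx i)).mp (hk i (Finset.mem_univ i))
  have ht : 0 < t := (div_pos ((hz j).lt_of_ne' hj) (hx j)).trans_le (hk j (Finset.mem_univ j))
  have hzk : z k = t * x k := (div_mul_cancel₀ (z k) (hx k).ne').symm
  have hmono : A *ᵥ z ≤ A *ᵥ (t • x) := fun i =>
    Finset.sum_le_sum fun j _ => mul_le_mul_of_nonneg_left (hzt j) (hA i j)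
  refine le_of_mul_le_mul_right ?_ (mul_pos ht (hx k))
  calc c * (t * x k) = c * z k := by rw [hzk]
    _ ≤ (A *ᵥ z) k := hcz k
    _ ≤ (A *ᵥ (t • x)) k := hmono k
    _ = t * (A *ᵥ x) k := by rw [mulVec_smul]; rfl
    _ ≤ t * (lam * x k) := mul_le_mul_of_nonneg_left (hx_sub k) ht.le
    _ = lam * (t * x k) := by ring

theorem norm_smul_norm_le_mulVec_norm {A : Matrix ι ι ℝ} (hA : ∀ i j, 0 ≤ A i j) {μ : ℂ}
    {v : ι → ℂ} (hv : A.map Complex.ofReal *ᵥ v = μ • v) :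
    ‖μ‖ • (fun i => ‖v i‖) ≤ A *ᵥ fun i => ‖v i‖ := fun i =>
  calc ‖μ‖ * ‖v i‖ = ‖(A.map Complex.ofReal *ᵥ v) i‖ := by rw [hv]; simp
    _ ≤ ∑ j, ‖(A i j : ℂ) * v j‖ := norm_sum_le _ _
    _ = (A *ᵥ fun i => ‖v i‖) i := by
      refine Finset.sum_congr rfl fun j _ => ?_
      rw [norm_mul, Complex.norm_real, Real.norm_of_nonneg (hA i j)]

theorem norm_le_of_mem_spectrum_of_mulVec_le_smul [DecidableEq ι] {A : Matrix ι ι ℝ}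
    (hA : ∀ i j, 0 ≤ A i j) {x : ι → ℝ} (hx : ∀ i, 0 < x i) {lam : ℝ}
    (hx_sub : A *ᵥ x ≤ lam • x) {μ : ℂ} (hμ : μ ∈ spectrum ℂ (A.map Complex.ofReal)) :
    ‖μ‖ ≤ lam := by
  obtain ⟨v, hv0, hv⟩ := (mem_spectrum_iff_exists_mulVec_eq_smul _ μ).mp hμ
  refine le_of_smul_le_mulVec_of_mulVec_le_smul hA hx (fun i => norm_nonneg (v i)) ?_
    (norm_smul_norm_le_mulVec_norm hA hv) hx_sub
  simpa [funext_iff] using hv0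

theorem ofReal_mem_spectrum_of_mulVec_eq_smul [DecidableEq ι] {A : Matrix ι ι ℝ} {x : ι → ℝ}
    (hx0 : x ≠ 0) {lam : ℝ} (hEig : A *ᵥ x = lam • x) :
    (lam : ℂ) ∈ spectrum ℂ (A.map Complex.ofReal) := by
  refine (mem_spectrum_iff_exists_mulVec_eq_smul _ _).mpr
    ⟨Complex.ofReal ∘ x, ?_, funext fun i => ?_⟩
  · simpa [funext_iff] using hx0
  · exact (RingHom.map_mulVec Complex.ofRealHom A x i).symm.trans (by simp [hEig])

end Matrix

/-- A positive eigenvector of a nonnegative matrix has eigenvalue equal to the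
spectral radius (the maximum of the complex moduli of the eigenvalues). -/
theorem positive_eigenvector_spectral_radius {n : ℕ} (hn : 0 < n)
    (A : Matrix (Fin n) (Fin n) ℝ) (hA : ∀ i j, 0 ≤ A i j)
    (x : Fin n → ℝ) (hx : ∀ i, 0 < x i) (lam : ℝ) (hEig : A.mulVec x = lam • x) :
    IsGreatest {r : ℝ | ∃ μ ∈ spectrum ℂ (A.map (Complex.ofReal ·)), r = ‖μ‖}
      lam := by
  have hx0 : x ≠ 0 := fun h => (hx ⟨0, hn⟩).ne' (congrFun h _)
  have hlam : (lam : ℂ) ∈ spectrum ℂ (A.map Complex.ofReal) :=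
    ofReal_mem_spectrum_of_mulVec_eq_smul hx0 hEig
  have hbound : ∀ μ ∈ spectrum ℂ (A.map Complex.ofReal), ‖μ‖ ≤ lam := fun μ hμ =>
    norm_le_of_mem_spectrum_of_mulVec_le_smul hA hx hEig.le hμ
  have hlam_nonneg : 0 ≤ lam := (norm_nonneg _).trans (hbound _ hlam)
  refine ⟨⟨lam, hlam, by simp [abs_of_nonneg hlam_nonneg]⟩, ?_⟩
  rintro r ⟨μ, hμ, rfl⟩
  exact hbound μ hμ
end

section
/- The number of noncrossing perfect pairings of k disjoint arcs together with L−2k uncrossed through-strands on L linearly ordered points (i.e., k-cap diagrams on L points) equals C(L,k) − C(L,k−1), where C denotes the binomial coefficient. -/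
/-!
Sort the cap diagrams on `n + 1` points by their last point. If it is free, deleting it leaves
a diagram with the same number of arcs on `n` points. Otherwise it is the right end of an arc
`(a, n)`; removing that arc leaves a diagram with one arc fewer on `n` points in which `a` is the
rightmost free point, since everything under the arc must be paired. Conversely, a diagram with
`k` arcs on `n > 2k` points has a free point, and joining its rightmost one to a new last point
keeps the diagram valid. Hence `D(n+1, k+1) = D(n, k+1) + D(n, k)`, which is Pascal's rule for
`C(L, k) - C(L, k-1)`; at the boundary `D(2k+1, k+1) = 0 = C(2k+1, k+1) - C(2k+1, k)`.
-/

/-- `P` is a `k`-cap diagram on `L` points: `k` disjoint arcs (pairs `(a,b)` with `a < b`),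
no two arcs cross, and every point strictly under an arc is paired within that arc's span. -/
def IsCapDiagram (L k : ℕ) (P : Finset (Fin L × Fin L)) : Prop :=
  P.card = k ∧
  (∀ p ∈ P, p.1 < p.2) ∧
  (∀ p ∈ P, ∀ q ∈ P, p ≠ q → p.1 ≠ q.1 ∧ p.1 ≠ q.2 ∧ p.2 ≠ q.1 ∧ p.2 ≠ q.2) ∧
  (∀ p ∈ P, ∀ q ∈ P, p.1 < q.1 → (p.2 < q.1 ∨ q.2 < p.2)) ∧
  (∀ p ∈ P, ∀ x : Fin L, p.1 < x → x < p.2 →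
    ∃ q ∈ P, (q.1 = x ∨ q.2 = x) ∧ p.1 < q.1 ∧ q.2 < p.2)

open Finset

def liftArc (n : ℕ) : Fin n × Fin n ↪ Fin (n + 1) × Fin (n + 1) :=
  Fin.castSuccEmb.prodMap Fin.castSuccEmb

@[simp] theorem liftArc_apply {n : ℕ} (p : Fin n × Fin n) :
    liftArc n p = (p.1.castSucc, p.2.castSucc) := rfl

theorem isCapDiagram_map_liftArc {n k : ℕ} {P : Finset (Fin n × Fin n)} :
    IsCapDiagram (n + 1) k (P.map (liftArc n)) ↔ IsCapDiagram n k P := by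
  simp only [IsCapDiagram, forall_mem_map, card_map, liftArc_apply]
  simp [Fin.forall_fin_succ', (Fin.castSucc_lt_last _).le]

def endpoints {L : ℕ} (P : Finset (Fin L × Fin L)) : Finset (Fin L) :=
  P.image Prod.fst ∪ P.image Prod.snd

theorem mem_endpoints {L : ℕ} {P : Finset (Fin L × Fin L)} {x : Fin L} :
    x ∈ endpoints P ↔ ∃ p ∈ P, p.1 = x ∨ p.2 = x := by
  simp only [endpoints, mem_union, mem_image, ← exists_or, ← and_or_left]

namespace IsCapDiagram

variable {L k : ℕ} {P : Finset (Fin L × Fin L)}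

theorem fst_ne_snd (h : IsCapDiagram L k P) {p q : Fin L × Fin L} (hp : p ∈ P) (hq : q ∈ P) :
    p.1 ≠ q.2 := by
  obtain rfl | hne := eq_or_ne p q
  · exact (h.2.1 p hp).ne
  · exact (h.2.2.1 p hp q hq hne).2.1

theorem card_endpoints (h : IsCapDiagram L k P) : #(endpoints P) = 2 * k := by
  have hfst : Set.InjOn Prod.fst P := fun p hp q hq hpq =>
    by_contra fun hne => (h.2.2.1 p hp q hq hne).1 hpq
  have hsnd : Set.InjOn Prod.snd P := fun p hp q hq hpq =>
    by_contra fun hne => (h.2.2.1 p hp q hq hne).2.2.2 hpq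
  have hdisj : Disjoint (P.image Prod.fst) (P.image Prod.snd) := by
    simp only [disjoint_left, mem_image]
    rintro _ ⟨p, hp, rfl⟩ ⟨q, hq, hqp⟩
    exact h.fst_ne_snd hp hq hqp.symm
  rw [endpoints, card_union_of_disjoint hdisj, card_image_of_injOn hfst,
    card_image_of_injOn hsnd, h.1, two_mul]

theorem two_mul_le (h : IsCapDiagram L k P) : 2 * k ≤ L := by
  simpa [h.card_endpoints] using card_le_univ (endpoints P)

theorem compl_endpoints_nonempty (h : IsCapDiagram L k P) (hk : 2 * k < L) :
    (endpoints P)ᶜ.Nonempty := by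
  rw [← card_pos, card_compl, Fintype.card_fin, h.card_endpoints]
  omega

theorem snd_lt_of_fst_lt_of_notMem (h : IsCapDiagram L k P) {q : Fin L × Fin L} (hq : q ∈ P)
    {x : Fin L} (hx : x ∉ endpoints P) (hqx : q.1 < x) : q.2 < x := by
  by_contra! hxq
  have hne : q.2 ≠ x := fun he => hx (mem_endpoints.2 ⟨q, hq, .inr he⟩)
  obtain ⟨r, hr, hrx, -⟩ := h.2.2.2.2 q hq x hqx (lt_of_le_of_ne hxq hne.symm)
  exact hx (mem_endpoints.2 ⟨r, hr, hrx⟩)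

theorem erase_of_forall_snd_le {p : Fin L × Fin L} (h : IsCapDiagram L (k + 1) P) (hp : p ∈ P)
    (hmax : ∀ q ∈ P, q.2 ≤ p.2) : IsCapDiagram L k (P.erase p) := by
  have hsub := erase_subset p P
  refine ⟨by rw [card_erase_of_mem hp, h.1, Nat.add_sub_cancel], fun q hq => h.2.1 q (hsub hq),
    fun q hq r hr => h.2.2.1 q (hsub hq) r (hsub hr),
    fun q hq r hr => h.2.2.2.1 q (hsub hq) r (hsub hr), fun q hq x h1 h2 => ?_⟩
  obtain ⟨r, hr, hrx, hqr1, hqr2⟩ := h.2.2.2.2 q (hsub hq) x h1 h2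
  refine ⟨r, mem_erase.2 ⟨?_, hr⟩, hrx, hqr1, hqr2⟩
  rintro rfl
  exact (hqr2.trans_le (hmax q (hsub hq))).false

end IsCapDiagram

theorem exists_map_liftArc_eq {n : ℕ} {P : Finset (Fin (n + 1) × Fin (n + 1))}
    (h : Fin.last n ∉ endpoints P) : ∃ Q : Finset (Fin n × Fin n), Q.map (liftArc n) = P := by
  suffices P ⊆ univ.map (liftArc n) by
    obtain ⟨Q, -, rfl⟩ := subset_map_iff.1 this
    exact ⟨Q, rfl⟩
  intro p hp
  have h1 : p.1 ≠ Fin.last n := fun he => h (mem_endpoints.2 ⟨p, hp, .inl he⟩)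
  have h2 : p.2 ≠ Fin.last n := fun he => h (mem_endpoints.2 ⟨p, hp, .inr he⟩)
  obtain ⟨a, ha⟩ := Fin.exists_castSucc_eq.2 h1
  obtain ⟨b, hb⟩ := Fin.exists_castSucc_eq.2 h2
  exact mem_map.2 ⟨(a, b), mem_univ _, by simp [ha, hb]⟩

section InsertLastArc

variable {n k : ℕ} {Q : Finset (Fin n × Fin n)} {a : Fin n}

theorem castSucc_last_notMem_map_liftArc :
    (a.castSucc, Fin.last n) ∉ Q.map (liftArc n) := by
  simp [Fin.castSucc_ne_last]

theorem IsCapDiagram.exists_fst_gt_of_isGreatest (hQ : IsCapDiagram n k Q)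
    (ha : IsGreatest (↑(endpoints Q)ᶜ : Set (Fin n)) a) {x : Fin n} (hax : a < x) :
    ∃ q ∈ Q, (q.1 = x ∨ q.2 = x) ∧ a < q.1 := by
  have hfree : a ∉ endpoints Q := by simpa using ha.1
  obtain ⟨q, hq, hqx⟩ := mem_endpoints.1 <|
    by_contra fun hx => (ha.2 (by simpa using hx)).not_gt hax
  refine ⟨q, hq, hqx, lt_of_not_ge fun hle => ?_⟩
  have hqa : q.1 < a := lt_of_le_of_ne hle fun h => hfree (mem_endpoints.2 ⟨q, hq, .inl h⟩)
  have := hQ.snd_lt_of_fst_lt_of_notMem hq hfree hqa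
  have := hQ.2.1 q hq
  rcases hqx with rfl | rfl <;> order

theorem IsCapDiagram.insert_map_liftArc (hQ : IsCapDiagram n k Q)
    (ha : IsGreatest (↑(endpoints Q)ᶜ : Set (Fin n)) a) :
    IsCapDiagram (n + 1) (k + 1) (insert (a.castSucc, Fin.last n) (Q.map (liftArc n))) := by
  have hP := isCapDiagram_map_liftArc.2 hQ
  have hfree : a ∉ endpoints Q := by simpa using ha.1
  have hne : ∀ q ∈ Q, q.1 ≠ a ∧ q.2 ≠ a := fun q hq =>
    ⟨fun h => hfree (mem_endpoints.2 ⟨q, hq, .inl h⟩),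
      fun h => hfree (mem_endpoints.2 ⟨q, hq, .inr h⟩)⟩
  refine ⟨by rw [card_insert_of_notMem castSucc_last_notMem_map_liftArc, card_map, hQ.1],
    ?_, ?_, ?_, ?_⟩
  · simp only [forall_mem_insert]
    exact ⟨Fin.castSucc_lt_last a, hP.2.1⟩
  · intro p hp q hq hpq
    rcases mem_insert.1 hp with rfl | hp <;> rcases mem_insert.1 hq with rfl | hq
    · exact absurd rfl hpq
    · obtain ⟨r, hr, rfl⟩ := mem_map.1 hq
      simp [(Fin.castSucc_ne_last _).symm, (hne r hr).1.symm, (hne r hr).2.symm]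
    · obtain ⟨r, hr, rfl⟩ := mem_map.1 hp
      simp [Fin.castSucc_ne_last, (hne r hr).1, (hne r hr).2]
    · exact hP.2.2.1 p hp q hq hpq
  · intro p hp q hq hlt
    rcases mem_insert.1 hp with rfl | hp <;> rcases mem_insert.1 hq with rfl | hq
    · exact absurd hlt (lt_irrefl _)
    · obtain ⟨r, -, rfl⟩ := mem_map.1 hq
      exact .inr (Fin.castSucc_lt_last _)
    · obtain ⟨r, hr, rfl⟩ := mem_map.1 hp
      simp only [liftArc_apply, Fin.castSucc_lt_castSucc_iff] at hlt ⊢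
      exact .inl (hQ.snd_lt_of_fst_lt_of_notMem hr hfree hlt)
    · exact hP.2.2.2.1 p hp q hq hlt
  · intro p hp x h1 h2
    rcases mem_insert.1 hp with rfl | hp
    · obtain ⟨y, rfl⟩ := Fin.exists_castSucc_eq.2 h2.ne
      obtain ⟨q, hq, hqy, haq⟩ :=
        hQ.exists_fst_gt_of_isGreatest ha (Fin.castSucc_lt_castSucc_iff.1 h1)
      exact ⟨liftArc n q, mem_insert_of_mem (mem_map_of_mem _ hq), by simpa using hqy,
        Fin.castSucc_lt_castSucc_iff.2 haq, Fin.castSucc_lt_last _⟩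
    · obtain ⟨q, hq, hx⟩ := hP.2.2.2.2 p hp x h1 h2
      exact ⟨q, mem_insert_of_mem hq, hx⟩

theorem IsCapDiagram.of_insert_map_liftArc
    (h : IsCapDiagram (n + 1) (k + 1) (insert (a.castSucc, Fin.last n) (Q.map (liftArc n)))) :
    IsCapDiagram n k Q ∧ IsGreatest (↑(endpoints Q)ᶜ : Set (Fin n)) a := by
  have harc := mem_insert_self (a.castSucc, Fin.last n) (Q.map (liftArc n))
  refine ⟨?_, ?_, fun x hx => ?_⟩
  · rw [← isCapDiagram_map_liftArc, ← erase_insert castSucc_last_notMem_map_liftArc]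
    exact h.erase_of_forall_snd_le harc fun q _ => Fin.le_last _
  · simp only [coe_compl, Set.mem_compl_iff, mem_coe, mem_endpoints, not_exists, not_and]
    intro q hq
    have hqa : liftArc n q ≠ (a.castSucc, Fin.last n) := by simp [Fin.castSucc_ne_last]
    obtain ⟨h1, -, h3, -⟩ := h.2.2.1 _ (mem_insert_of_mem (mem_map_of_mem _ hq)) _ harc hqa
    rintro (rfl | rfl)
    exacts [h1 rfl, h3 rfl]
  · by_contra! hax
    obtain ⟨r, hr, hrx, -, hr2⟩ := h.2.2.2.2 _ harc x.castSucc
      (Fin.castSucc_lt_castSucc_iff.2 hax) (Fin.castSucc_lt_last x)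
    rcases mem_insert.1 hr with rfl | hr
    · exact lt_irrefl _ hr2
    obtain ⟨q, hq, rfl⟩ := mem_map.1 hr
    simp only [liftArc_apply, Fin.castSucc_inj] at hrx
    simp only [coe_compl, Set.mem_compl_iff, mem_coe] at hx
    exact hx (mem_endpoints.2 ⟨q, hq, hrx⟩)

theorem isCapDiagram_insert_map_liftArc_iff :
    IsCapDiagram (n + 1) (k + 1) (insert (a.castSucc, Fin.last n) (Q.map (liftArc n))) ↔
      IsCapDiagram n k Q ∧ IsGreatest (↑(endpoints Q)ᶜ : Set (Fin n)) a :=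
  ⟨IsCapDiagram.of_insert_map_liftArc, fun h => h.1.insert_map_liftArc h.2⟩

end InsertLastArc

theorem IsCapDiagram.exists_eq_insert_map_liftArc {n k : ℕ}
    {P : Finset (Fin (n + 1) × Fin (n + 1))} (h : IsCapDiagram (n + 1) k P)
    (hlast : Fin.last n ∈ endpoints P) :
    ∃ (a : Fin n) (Q : Finset (Fin n × Fin n)),
      insert (a.castSucc, Fin.last n) (Q.map (liftArc n)) = P := by
  have hfst : ∀ p ∈ P, p.1 ≠ Fin.last n := fun p hp =>
    ((h.2.1 p hp).trans_le (Fin.le_last _)).ne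
  obtain ⟨p, hp, hpl | hpl⟩ := mem_endpoints.1 hlast
  · exact absurd hpl (hfst p hp)
  obtain ⟨a, ha⟩ := Fin.exists_castSucc_eq.2 (hfst p hp)
  obtain ⟨Q, hQ⟩ := exists_map_liftArc_eq (P := P.erase p) fun hl => by
    obtain ⟨q, hq, hql | hql⟩ := mem_endpoints.1 hl
    · exact hfst q (mem_of_mem_erase hq) hql
    · exact (h.2.2.1 q (mem_of_mem_erase hq) p hp (ne_of_mem_erase hq)).2.2.2
        (hql.trans hpl.symm)
  refine ⟨a, Q, ?_⟩
  rw [hQ, ha, ← hpl, insert_erase hp]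

open Classical in
noncomputable def capDiagrams (L k : ℕ) : Finset (Finset (Fin L × Fin L)) :=
  univ.filter (IsCapDiagram L k)

theorem mem_capDiagrams {L k : ℕ} {P : Finset (Fin L × Fin L)} :
    P ∈ capDiagrams L k ↔ IsCapDiagram L k P := by
  simp [capDiagrams]

theorem capDiagrams_zero (L : ℕ) : capDiagrams L 0 = {∅} := by
  ext P
  rw [mem_capDiagrams, mem_singleton]
  refine ⟨fun h => card_eq_zero.1 h.1, ?_⟩
  rintro rfl
  simp [IsCapDiagram]

theorem capDiagrams_eq_empty {L k : ℕ} (h : L < 2 * k) : capDiagrams L k = ∅ :=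
  eq_empty_of_forall_notMem fun _ hP => (mem_capDiagrams.1 hP).two_mul_le.not_gt h

theorem card_capDiagrams_filter_last_notMem (n k : ℕ) :
    #((capDiagrams (n + 1) k).filter (Fin.last n ∉ endpoints ·)) = #(capDiagrams n k) := by
  refine (card_bij (fun Q _ => Q.map (liftArc n)) (fun Q hQ => ?_)
    (fun _ _ _ _ => (map_injective _ ·)) (fun P hP => ?_)).symm
  · simp only [mem_filter, mem_capDiagrams, isCapDiagram_map_liftArc] at hQ ⊢
    simp [hQ, endpoints, Fin.castSucc_ne_last]
  · simp only [mem_filter, mem_capDiagrams] at hP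
    obtain ⟨Q, rfl⟩ := exists_map_liftArc_eq hP.2
    exact ⟨Q, mem_capDiagrams.2 (isCapDiagram_map_liftArc.1 hP.1), rfl⟩

theorem card_capDiagrams_filter_last_mem {n k : ℕ} (hk : 2 * k < n) :
    #((capDiagrams (n + 1) (k + 1)).filter (Fin.last n ∈ endpoints ·)) =
      #(capDiagrams n k) := by
  refine (card_bij (fun (Q : Finset (Fin n × Fin n)) hQ => insert ((((endpoints Q)ᶜ).max'
      ((mem_capDiagrams.1 hQ).compl_endpoints_nonempty hk)).castSucc, Fin.last n)
      (Q.map (liftArc n))) (fun Q hQ => ?_) (fun Q₁ _ Q₂ _ h => ?_) (fun P hP => ?_)).symm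
  · rw [mem_filter, mem_capDiagrams, isCapDiagram_insert_map_liftArc_iff]
    refine ⟨⟨mem_capDiagrams.1 hQ, by simpa using isGreatest_max' (endpoints Q)ᶜ _⟩, ?_⟩
    exact mem_endpoints.2 ⟨_, mem_insert_self _ _, .inr rfl⟩
  · ext q
    simpa [(Fin.castSucc_ne_last _).symm] using congrArg (liftArc n q ∈ ·) h
  · rw [mem_filter, mem_capDiagrams] at hP
    obtain ⟨a, Q, rfl⟩ := hP.1.exists_eq_insert_map_liftArc hP.2
    obtain ⟨hQ, ha⟩ := isCapDiagram_insert_map_liftArc_iff.1 hP.1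
    refine ⟨Q, mem_capDiagrams.2 hQ, ?_⟩
    rw [(isGreatest_max' _ _).unique (by simpa using ha)]

theorem card_capDiagrams_succ_succ {n k : ℕ} (hk : 2 * k < n) :
    #(capDiagrams (n + 1) (k + 1)) = #(capDiagrams n (k + 1)) + #(capDiagrams n k) := by
  rw [← card_filter_add_card_filter_not (Fin.last n ∉ endpoints ·),
    card_capDiagrams_filter_last_notMem]
  simp only [not_not]
  rw [card_capDiagrams_filter_last_mem hk]

theorem card_capDiagrams {L k : ℕ} (hk : 2 * k ≤ L) :
    (#(capDiagrams L k) : ℤ) = L.choose k - if k = 0 then 0 else L.choose (k - 1) := by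
  induction L generalizing k with
  | zero =>
    obtain rfl : k = 0 := by omega
    simp [capDiagrams_zero]
  | succ n ih =>
    rcases k with _ | k
    · simp [capDiagrams_zero]
    have hnext : (#(capDiagrams n (k + 1)) : ℤ) = n.choose (k + 1) - n.choose k := by
      rcases le_or_gt (2 * (k + 1)) n with h | h
      · simpa using ih h
      · obtain rfl : n = 2 * k + 1 := by omega
        simp [capDiagrams_eq_empty h, Nat.choose_symm_half]
    have hpascal :
        ((n + 1).choose k : ℤ) = n.choose k + if k = 0 then 0 else n.choose (k - 1) := by
      rcases k with _ | k <;> simp [Nat.choose_succ_succ', add_comm]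
    rw [card_capDiagrams_succ_succ (by omega), Nat.cast_add, hnext, ih (by omega),
      if_neg k.succ_ne_zero, Nat.add_sub_cancel, hpascal, Nat.choose_succ_succ']
    push_cast
    ring

/-- The number of `k`-cap diagrams on `L` points is `C(L,k) − C(L,k−1)`,
where `C(L,k−1)` is taken to be `0` when `k = 0`. -/
theorem capDiagram_count (L k : ℕ) (hk : 2 * k ≤ L) :
    (Nat.card {P : Finset (Fin L × Fin L) // IsCapDiagram L k P} : ℤ)
      = L.choose k - (if k = 0 then 0 else L.choose (k - 1)) := by
  rw [← card_capDiagrams hk, ← Nat.card_eq_finsetCard,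
    Nat.card_congr (Equiv.subtypeEquivRight fun _ => mem_capDiagrams)]
end

section
/- For natural numbers m ≥ n ≥ k and 0 ≤ j with n−j ≥ k, the eigenvalue λ_j = ((m+k−j)!·m!·(n−j)!·(n−k)!)/((m−j)!·(m+k)!·(n−j−k)!·n!) satisfies 0 < λ_j ≤ 1 and λ_{j+1} ≤ λ_j; moreover λ_0 = 1. -/
open Nat

/-- Classical eigenvalues of the cascade operator `K_{m,n}(k)`. -/
noncomputable def cascadeEig (m n k j : ℕ) : ℚ :=
  ((m + k - j)! * m ! * (n - j)! * (n - k)! : ℚ) / ((m - j)! * (m + k)! * (n - j - k)! * n !)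

lemma cascadeEig_pos (m n k j : ℕ) : 0 < cascadeEig m n k j := by
  unfold cascadeEig
  have h1 : (0:ℚ) < (m + k - j)! := by exact_mod_cast (m + k - j).factorial_pos
  have h2 : (0:ℚ) < m ! := by exact_mod_cast m.factorial_pos
  have h3 : (0:ℚ) < (n - j)! := by exact_mod_cast (n - j).factorial_pos
  have h4 : (0:ℚ) < (n - k)! := by exact_mod_cast (n - k).factorial_pos
  have h5 : (0:ℚ) < (m - j)! := by exact_mod_cast (m - j).factorial_pos
  have h6 : (0:ℚ) < (m + k)! := by exact_mod_cast (m + k).factorial_pos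
  have h7 : (0:ℚ) < (n - j - k)! := by exact_mod_cast (n - j - k).factorial_pos
  have h8 : (0:ℚ) < n ! := by exact_mod_cast n.factorial_pos
  positivity

lemma cascadeEig_zero (m n k : ℕ) : cascadeEig m n k 0 = 1 := by
  unfold cascadeEig
  have h2 : (m ! : ℚ) ≠ 0 := by exact_mod_cast m.factorial_ne_zero
  have h4 : ((n - k)! : ℚ) ≠ 0 := by exact_mod_cast (n - k).factorial_ne_zero
  have h6 : ((m + k)! : ℚ) ≠ 0 := by exact_mod_cast (m + k).factorial_ne_zero
  have h8 : (n ! : ℚ) ≠ 0 := by exact_mod_cast n.factorial_ne_zero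
  simp only [Nat.sub_zero]
  field_simp

lemma cascadeEig_mono (m n k : ℕ) (hnm : n ≤ m) (j : ℕ) (hj : j + 1 + k ≤ n) :
    cascadeEig m n k (j + 1) ≤ cascadeEig m n k j := by
  set a := m - (j + 1) with ha
  set b := n - (j + 1) with hb
  have h1 : m - j = a + 1 := by omega
  have h2 : m + k - j = a + 1 + k := by omega
  have h3 : m + k - (j + 1) = a + k := by omega
  have h4 : n - j = b + 1 := by omega
  have h5 : k ≤ b := by omega
  have h6 : n - j - k = (b - k) + 1 := by omega
  have h7 : n - (j + 1) - k = b - k := by omega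
  unfold cascadeEig
  have ha' : m - (j + 1) = a := rfl
  have hb' : n - (j + 1) = b := rfl
  rw [h6, h7, h1, h2, h3, h4, ha', hb']
  rw [div_le_div_iff₀ (by positivity) (by positivity)]
  have key : (a + k)! * m ! * b ! * (n - k)! * ((a + 1)! * (m + k)! * ((b - k) + 1)! * n !)
      ≤ (a + 1 + k)! * m ! * (b + 1)! * (n - k)! * (a ! * (m + k)! * (b - k)! * n !) := by
    have e1 : (a + 1)! = (a + 1) * a ! := Nat.factorial_succ a
    have e2 : ((b - k) + 1)! = ((b - k) + 1) * (b - k)! := Nat.factorial_succ _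
    have e3 : (a + 1 + k)! = (a + 1 + k) * (a + k)! := by
      have : a + 1 + k = (a + k) + 1 := by omega
      rw [this, Nat.factorial_succ]
    have e4 : (b + 1)! = (b + 1) * b ! := Nat.factorial_succ b
    rw [e1, e2, e3, e4]
    have hmain : (a + 1) * ((b - k) + 1) ≤ (a + 1 + k) * (b + 1) :=
      Nat.mul_le_mul (by omega) (by omega)
    calc (a + k)! * m ! * b ! * (n - k)! * ((a + 1) * a ! * (m + k)! * (((b - k) + 1) * (b - k)!) * n !)
        = ((a + 1) * ((b - k) + 1)) * ((a + k)! * m ! * b ! * (n - k)! * (a ! * (m + k)! * (b - k)! * n !)) := by ring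
      _ ≤ ((a + 1 + k) * (b + 1)) * ((a + k)! * m ! * b ! * (n - k)! * (a ! * (m + k)! * (b - k)! * n !)) :=
          Nat.mul_le_mul_right _ hmain
      _ = (a + 1 + k) * (a + k)! * m ! * ((b + 1) * b !) * (n - k)! * (a ! * (m + k)! * (b - k)! * n !) := by ring
  exact_mod_cast key

/-- For `m ≥ n ≥ k`, the eigenvalues `λ_j` satisfy `0 < λ_j ≤ 1`, are nonincreasing in `j`,
and `λ_0 = 1`. -/
theorem cascadeEig_properties (m n k : ℕ) (hnm : n ≤ m) (hkn : k ≤ n) :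
    (∀ j : ℕ, j + k ≤ n → 0 < cascadeEig m n k j ∧ cascadeEig m n k j ≤ 1) ∧
    (∀ j : ℕ, j + 1 + k ≤ n → cascadeEig m n k (j + 1) ≤ cascadeEig m n k j) ∧
    cascadeEig m n k 0 = 1 := by
  refine ⟨?_, fun j hj => cascadeEig_mono m n k hnm j hj, cascadeEig_zero m n k⟩
  intro j hj
  refine ⟨cascadeEig_pos m n k j, ?_⟩
  induction j with
  | zero => rw [cascadeEig_zero]
  | succ i ih =>
    calc cascadeEig m n k (i + 1) ≤ cascadeEig m n k i :=
          cascadeEig_mono m n k hnm i hj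
      _ ≤ 1 := ih (by omega)
end
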